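/- arXiv:2403.05999 — 3 statements merged into one kernel-verified Lean document; each statement's English description precedes it below -/
import Mathlib

section
/- Let H = ℝ^d × B with a positive semi-definite symmetric bilinear form ⟨·,·⟩_K, let Ħ be the completion of the quotient inner-product space H/{h : ‖h‖_K = 0}, let π₁ : Ħ → ℝ^d/{τ : ‖τ‖ = 0} be the continuous extension of [(τ,b)] ↦ [τ], let Π^⊥ be the orthogonal projection onto (ker π₁)^⊥, and define the d×d matrix Ĩ by Ĩ_{ij} = ⟨Π^⊥[e_i,0], Π^⊥[e_j,0]⟩_K. Then for every τ ∈ ℝ^d, inf_{b∈B} ‖(τ,b)‖_K² = τᵀ Ĩ τ, and ker Ĩ = {τ ∈ ℝ^d : inf_{b∈B} ‖(τ,b)‖_K = 0}. -/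
open Matrix

/-- Efficient information matrix.  `HH` plays the role of the completion `Ħ`
of the quotient of `H = ℝ^d × B` by the null space of the seminorm induced by the positive
semi-definite symmetric bilinear form `K` (embedded via `φ`, which is inner-product
compatible and has dense range); `E` plays the role of the quotient `ℝ^d/{τ : ‖τ‖ = 0}`
with quotient map `qτ` whose norm is `‖τ‖ = inf_b ‖(τ,b)‖_K`; `π₁ : Ħ → E` is the
continuous extension of `[(τ,b)] ↦ [τ]`; `P = Π^⊥` is the orthogonal projection onto
`(ker π₁)^⊥`; and `I` is the matrix `I i j = ⟨Π^⊥[e_i,0], Π^⊥[e_j,0]⟩`.  Then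
`inf_b ‖(τ,b)‖_K² = τᵀ I τ` and `ker I = {τ : inf_b ‖(τ,b)‖_K = 0}`. -/
theorem statement_3
    (d : ℕ) (B : Type*) [AddCommGroup B] [Module ℝ B]
    (K : (Fin d → ℝ) × B → (Fin d → ℝ) × B → ℝ)
    (hsymm : ∀ h g, K h g = K g h)
    (hadd : ∀ h₁ h₂ g, K (h₁ + h₂) g = K h₁ g + K h₂ g)
    (hsmul : ∀ (c : ℝ) h g, K (c • h) g = c * K h g)
    (hpos : ∀ h, 0 ≤ K h h)
    (HH : Type*) [NormedAddCommGroup HH] [InnerProductSpace ℝ HH] [CompleteSpace HH]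
    [TopologicalSpace.SeparableSpace HH]
    (φ : ((Fin d → ℝ) × B) →ₗ[ℝ] HH)
    (hφdense : DenseRange φ)
    (hφinner : ∀ h g, (inner ℝ (φ h) (φ g) : ℝ) = K h g)
    (E : Type*) [NormedAddCommGroup E] [NormedSpace ℝ E]
    (qτ : (Fin d → ℝ) →ₗ[ℝ] E)
    (hqsurj : Function.Surjective qτ)
    (hqnorm : ∀ τ : Fin d → ℝ, ‖qτ τ‖ = ⨅ b : B, Real.sqrt (K (τ, b) (τ, b)))
    (π₁ : HH →L[ℝ] E)
    (hπ₁ : ∀ (τ : Fin d → ℝ) (b : B), π₁ (φ (τ, b)) = qτ τ)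
    -- `P` is the orthogonal projection `Π^⊥` onto `(ker π₁)^⊥`:
    (P : HH →ₗ[ℝ] HH)
    (hP : ∀ x : HH, P x ∈ (LinearMap.ker (π₁ : HH →ₗ[ℝ] E))ᗮ ∧ x - P x ∈ LinearMap.ker (π₁ : HH →ₗ[ℝ] E))
    (I : Matrix (Fin d) (Fin d) ℝ)
    (hI : ∀ i j : Fin d,
      I i j = (inner ℝ (P (φ (Pi.single i 1, 0))) (P (φ (Pi.single j 1, 0))) : ℝ)) :
    (∀ τ : Fin d → ℝ, (⨅ b : B, K (τ, b) (τ, b)) = τ ⬝ᵥ I.mulVec τ) ∧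
    (∀ τ : Fin d → ℝ, I.mulVec τ = 0 ↔ (⨅ b : B, Real.sqrt (K (τ, b) (τ, b))) = 0) := by
  classical
  haveI : Nonempty B := ⟨0⟩
  -- basic norm facts
  have hnorm : ∀ h, ‖φ h‖ = Real.sqrt (K h h) := fun h => by
    rw [norm_eq_sqrt_real_inner, hφinner]
  have hK : ∀ h, K h h = ‖φ h‖ ^ 2 := fun h => by
    rw [← hφinner]; exact real_inner_self_eq_norm_sq _
  have hker0 : ∀ b : B, φ (0, b) ∈ LinearMap.ker (π₁ : HH →ₗ[ℝ] E) := by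
    intro b
    have := hπ₁ 0 b
    rw [map_zero] at this
    exact LinearMap.mem_ker.mpr this
  have hdiff : ∀ (τ : Fin d → ℝ) (b c : B), φ (τ, b) - φ (τ, c) = φ (0, b - c) := by
    intro τ b c
    rw [← map_sub]
    congr 1
    simp [Prod.ext_iff]
  -- P minimizes distance to the kernel
  have hPle : ∀ (x k : HH), k ∈ LinearMap.ker (π₁ : HH →ₗ[ℝ] E) → ‖P x‖ ≤ ‖x - k‖ := by
    intro x k hk
    have h1 := (hP x).1
    have h2 := (hP x).2
    have hw : x - P x - k ∈ LinearMap.ker (π₁ : HH →ₗ[ℝ] E) := Submodule.sub_mem _ h2 hk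
    have ho : (inner ℝ (P x) (x - P x - k) : ℝ) = 0 := by
      rw [real_inner_comm]
      exact Submodule.inner_right_of_mem_orthogonal hw h1
    have hdecomp : x - k = P x + (x - P x - k) := by abel
    have hsq := norm_add_sq_real (P x) (x - P x - k)
    rw [← hdecomp, ho] at hsq
    nlinarith [norm_nonneg (x - k), norm_nonneg (P x), norm_nonneg (x - P x - k),
      sq_nonneg ‖x - P x - k‖]
  -- the kernel is the closure of the range of b ↦ φ (0, b)
  have hclosure : ∀ x ∈ LinearMap.ker (π₁ : HH →ₗ[ℝ] E),
      x ∈ closure (Set.range fun b : B => φ (0, b)) := by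
    intro x hx
    rw [Metric.mem_closure_iff]
    intro ε hε
    set C := ‖π₁‖ + 1 with hC
    have hC0 : (0:ℝ) < C := by positivity
    have hδ : 0 < ε / (3 * C) := by positivity
    obtain ⟨h, hh⟩ := Metric.denseRange_iff.mp hφdense x (ε / (3 * C)) hδ
    obtain ⟨σ, c⟩ := h
    have hx0 : π₁ x = 0 := LinearMap.mem_ker.mp hx
    have hq : ‖qτ σ‖ < ε / 3 := by
      have h1 : qτ σ = π₁ (φ (σ, c) - x) := by
        rw [map_sub, hπ₁ σ c, hx0, sub_zero]
      have h2 : ‖π₁ (φ (σ, c) - x)‖ ≤ ‖π₁‖ * ‖φ (σ, c) - x‖ := π₁.le_opNorm _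
      have h3 : ‖φ (σ, c) - x‖ < ε / (3 * C) := by
        rw [← dist_eq_norm, dist_comm]
        exact hh
      have h4 : (0:ℝ) ≤ ‖π₁‖ := norm_nonneg _
      have h5 : ‖π₁‖ < C := by rw [hC]; linarith
      rw [h1]
      calc ‖π₁ (φ (σ, c) - x)‖ ≤ ‖π₁‖ * ‖φ (σ, c) - x‖ := h2
        _ < C * (ε / (3 * C)) := by
            apply mul_lt_mul' (le_of_lt h5) h3 (norm_nonneg _) hC0
        _ = ε / 3 := by field_simp
    rw [hqnorm] at hq
    obtain ⟨b', hb'⟩ := exists_lt_of_ciInf_lt hq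
    rw [← hnorm] at hb'
    refine ⟨φ (0, c - b'), ⟨c - b', rfl⟩, ?_⟩
    have heq : φ ((0 : Fin d → ℝ), c - b') = φ (σ, c) - φ (σ, b') := (hdiff σ c b').symm
    rw [dist_eq_norm, heq]
    have habel : x - (φ (σ, c) - φ (σ, b')) = (x - φ (σ, c)) + φ (σ, b') := by abel
    have hd : ‖x - φ (σ, c)‖ < ε / (3 * C) := by rw [← dist_eq_norm]; exact hh
    have hle : ε / (3 * C) ≤ ε / 3 := by
      apply div_le_div_of_nonneg_left (le_of_lt hε) (by norm_num)
      nlinarith [norm_nonneg π₁]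
    calc ‖x - (φ (σ, c) - φ (σ, b'))‖ ≤ ‖x - φ (σ, c)‖ + ‖φ (σ, b')‖ := by
          rw [habel]; exact norm_add_le _ _
      _ < ε := by linarith
  -- the main computation: the infimum equals the norm of the projection
  have hMain : ∀ τ : Fin d → ℝ,
      (⨅ b : B, Real.sqrt (K (τ, b) (τ, b))) = ‖P (φ (τ, (0:B)))‖ := by
    intro τ
    have hEq : ∀ b : B, Real.sqrt (K (τ, b) (τ, b)) = ‖φ (τ, b)‖ := fun b => (hnorm _).symm
    rw [iInf_congr hEq]
    have hlb : ∀ b : B, ‖P (φ (τ, (0:B)))‖ ≤ ‖φ (τ, b)‖ := by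
      intro b
      have hkmem : φ (τ, (0:B)) - φ (τ, b) ∈ LinearMap.ker (π₁ : HH →ₗ[ℝ] E) := by
        rw [hdiff]; exact hker0 _
      have := hPle (φ (τ, (0:B))) _ hkmem
      simpa using this
    have hbdd : BddBelow (Set.range fun b : B => ‖φ (τ, b)‖) := by
      refine ⟨0, ?_⟩
      rintro r ⟨b, rfl⟩
      exact norm_nonneg _
    apply le_antisymm
    · apply le_of_forall_pos_le_add
      intro ε hε
      have hx : φ (τ, (0:B)) - P (φ (τ, (0:B))) ∈ LinearMap.ker (π₁ : HH →ₗ[ℝ] E) := (hP _).2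
      have hcl := hclosure _ hx
      obtain ⟨y, ⟨b, rfl⟩, hy⟩ := Metric.mem_closure_iff.mp hcl ε hε
      have h1 : φ (τ, -b) = P (φ (τ, (0:B))) + (φ (τ, (0:B)) - P (φ (τ, (0:B))) - φ (0, b)) := by
        have h2 : φ (τ, (0:B)) - φ ((0 : Fin d → ℝ), b) = φ (τ, -b) := by
          rw [← map_sub]; congr 1; simp [Prod.ext_iff]
        rw [← h2]; abel
      have h3 : ‖φ (τ, -b)‖ ≤ ‖P (φ (τ, (0:B)))‖ + ε := by
        rw [h1]
        refine (norm_add_le _ _).trans ?_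
        have h4 : ‖φ (τ, (0:B)) - P (φ (τ, (0:B))) - φ (0, b)‖ < ε := by
          rw [← dist_eq_norm] at *
          exact hy
        linarith
      exact (ciInf_le hbdd (-b)).trans h3
    · exact le_ciInf hlb
  -- algebra: the quadratic form
  set u : Fin d → HH := fun i => P (φ (Pi.single i 1, 0)) with hu
  have hτ0 : ∀ τ : Fin d → ℝ,
      φ (τ, (0:B)) = ∑ i, τ i • φ (Pi.single i 1, 0) := by
    intro τ
    have hrep : ((τ, (0:B)) : (Fin d → ℝ) × B)
        = ∑ i : Fin d, τ i • ((Pi.single i 1 : Fin d → ℝ), (0:B)) := by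
      have h1 : ∀ i : Fin d, τ i • ((Pi.single i 1 : Fin d → ℝ), (0:B))
          = ((Pi.single i (τ i) : Fin d → ℝ), (0:B)) := by
        intro i
        refine Prod.ext ?_ ?_
        · funext j
          simp [Pi.single_apply, mul_ite]
        · simp
      rw [Finset.sum_congr rfl (fun i _ => h1 i)]
      refine Prod.ext ?_ ?_
      · rw [Prod.fst_sum]
        simpa using (Finset.univ_sum_single τ).symm
      · rw [Prod.snd_sum]
        simp
    rw [hrep, map_sum]
    simp only [_root_.map_smul]
  have hPsum : ∀ τ : Fin d → ℝ, P (φ (τ, (0:B))) = ∑ i, τ i • u i := by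
    intro τ
    rw [hτ0, map_sum]
    simp [hu]
  have hMv : ∀ (τ : Fin d → ℝ) (i : Fin d),
      I.mulVec τ i = (inner ℝ (u i) (P (φ (τ, (0:B)))) : ℝ) := by
    intro τ i
    rw [hPsum, inner_sum]
    simp only [mulVec, dotProduct, hI, real_inner_smul_right]
    rw [Finset.sum_congr rfl]
    intro j _
    rw [hu]
    ring
  have hquad : ∀ τ : Fin d → ℝ, τ ⬝ᵥ I.mulVec τ = ‖P (φ (τ, (0:B)))‖ ^ 2 := by
    intro τ
    calc τ ⬝ᵥ I.mulVec τ
        = ∑ i, τ i * (inner ℝ (u i) (P (φ (τ, (0:B)))) : ℝ) := by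
          rw [dotProduct]
          exact Finset.sum_congr rfl fun i _ => by rw [hMv]
      _ = (inner ℝ (∑ i, τ i • u i) (P (φ (τ, (0:B)))) : ℝ) := by
          rw [sum_inner]
          exact (Finset.sum_congr rfl fun i _ => (real_inner_smul_left _ _ _)).symm
      _ = (inner ℝ (P (φ (τ, (0:B)))) (P (φ (τ, (0:B)))) : ℝ) := by rw [← hPsum]
      _ = ‖P (φ (τ, (0:B)))‖ ^ 2 := real_inner_self_eq_norm_sq _
  constructor
  · intro τ
    have h0 : (0:ℝ) ≤ ⨅ b : B, K (τ, b) (τ, b) := le_ciInf fun b => hpos _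
    have hs : Real.sqrt (⨅ b : B, K (τ, b) (τ, b))
        = ⨅ b : B, Real.sqrt (K (τ, b) (τ, b)) := by
      apply Monotone.map_ciInf_of_continuousAt
      · exact Real.continuous_sqrt.continuousAt
      · exact fun a b h => Real.sqrt_le_sqrt h
      · refine ⟨0, ?_⟩
        rintro r ⟨b, rfl⟩
        exact hpos _
    rw [hMain τ] at hs
    have := congrArg (· ^ 2) hs
    simp only [Real.sq_sqrt h0] at this
    rw [this, hquad]
  · intro τ
    constructor
    · intro hz
      have h1 := hquad τ
      rw [hz] at h1
      simp only [dotProduct_zero] at h1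
      have h2 : ‖P (φ (τ, (0:B)))‖ = 0 := by nlinarith [norm_nonneg (P (φ (τ, (0:B))))]
      rw [hMain τ]
      exact h2
    · intro hz
      have hN : ‖P (φ (τ, (0:B)))‖ = 0 := by rw [← hMain τ]; exact hz
      have hP0 : P (φ (τ, (0:B))) = 0 := norm_eq_zero.mp hN
      funext i
      rw [hMv τ i, hP0, inner_zero_right]
      rfl
end

section
/- Let (X, d) be a pseudometric space, K ⊆ X compact, and f_n, f : X → ℝ functions such that f_n(x) → f(x) for every x ∈ K, f is continuous on K, and (f_n) is asymptotically equicontinuous on K. Then sup_{x∈K} |f_n(x) − f(x)| → 0. -/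
/-- On a compact subset `K` of a pseudometric space, pointwise convergence
`f_n → f` with `f` continuous on `K` and `(f_n)` asymptotically equicontinuous on `K`
implies uniform convergence on `K`. -/
theorem statement_11
    (X : Type*) [PseudoMetricSpace X] (K : Set X) (hK : IsCompact K)
    (f : ℕ → X → ℝ) (flim : X → ℝ)
    (hpt : ∀ x ∈ K, Filter.Tendsto (fun n => f n x) Filter.atTop (nhds (flim x)))
    (hcont : ContinuousOn flim K)
    -- asymptotic equicontinuity of `(f_n)` on `K`:
    (haec : ∀ x ∈ K, ∀ ε > (0 : ℝ), ∃ δ > (0 : ℝ), ∃ N : ℕ, ∀ n ≥ N, ∀ y ∈ K,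
      dist x y < δ → |f n x - f n y| < ε) :
    TendstoUniformlyOn f flim Filter.atTop K := by
  rw [Metric.tendstoUniformlyOn_iff]
  intro ε hε
  have hε4 : (0:ℝ) < ε/4 := by linarith
  choose δ hδpos N haec' using fun (x : X) (hx : x ∈ K) => haec x hx (ε/4) hε4
  have hcont' : ∀ x ∈ K, ∃ ρ > (0:ℝ), ∀ y ∈ K, dist y x < ρ → |flim y - flim x| < ε/4 := by
    intro x hx
    obtain ⟨ρ, hρ, h⟩ := Metric.continuousWithinAt_iff.mp (hcont x hx) (ε/4) hε4
    exact ⟨ρ, hρ, fun y hy hd => by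
      have := h hy hd
      rwa [Real.dist_eq] at this⟩
  choose ρ hρpos hρ using hcont'
  choose M hM using fun (x : X) (hx : x ∈ K) =>
    (Metric.tendsto_atTop.mp (hpt x hx)) (ε/4) hε4
  obtain ⟨t, hcover⟩ := hK.elim_nhds_subcover'
    (fun x hx => Metric.ball x (min (δ x hx) (ρ x hx)))
    (fun x hx => Metric.ball_mem_nhds x (lt_min (hδpos x hx) (hρpos x hx)))
  refine Filter.eventually_atTop.mpr ⟨t.sup (fun x => max (N x.1 x.2) (M x.1 x.2)), ?_⟩
  intro n hn x hx
  obtain ⟨y, hyt, hxy⟩ := Set.mem_iUnion₂.mp (hcover hx)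
  have hxy' : dist x y.1 < min (δ y.1 y.2) (ρ y.1 y.2) := Metric.mem_ball.mp hxy
  have hle : max (N y.1 y.2) (M y.1 y.2) ≤ n :=
    le_trans (Finset.le_sup (f := fun x => max (N x.1 x.2) (M x.1 x.2)) hyt) hn
  have h1 : |f n y.1 - f n x| < ε/4 :=
    haec' y.1 y.2 n (le_trans (le_max_left _ _) hle) x hx
      (by rw [dist_comm]; exact lt_of_lt_of_le hxy' (min_le_left _ _))
  have h2 : dist (f n y.1) (flim y.1) < ε/4 := hM y.1 y.2 n (le_trans (le_max_right _ _) hle)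
  have h3 : |flim x - flim y.1| < ε/4 :=
    hρ y.1 y.2 x hx (lt_of_lt_of_le hxy' (min_le_right _ _))
  have h2' : |f n y.1 - flim y.1| < ε/4 := by rwa [Real.dist_eq] at h2
  rw [Real.dist_eq]
  have : flim x - f n x = (flim x - flim y.1) - (f n y.1 - flim y.1) + (f n y.1 - f n x) := by ring
  rw [this]
  calc |(flim x - flim y.1) - (f n y.1 - flim y.1) + (f n y.1 - f n x)|
      ≤ |(flim x - flim y.1) - (f n y.1 - flim y.1)| + |f n y.1 - f n x| := abs_add_le _ _
    _ ≤ |flim x - flim y.1| + |f n y.1 - flim y.1| + |f n y.1 - f n x| := by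
        gcongr; exact abs_sub _ _
    _ < ε := by linarith
end

section
/- Let (V̂_n) be a sequence of random d×d symmetric positive semi-definite matrices and V a fixed symmetric positive semi-definite matrix with V̂_n → V in probability. Then V̂_n† → V† in probability if and only if rank(V̂_n) → rank(V) in probability. -/
open MeasureTheory Matrix Filter

section s17aux
open Polynomial

/-- The Penrose conditions characterising the Moore–Penrose pseudoinverse. -/
def IsMoorePenrose {d : ℕ} (V Vd : Matrix (Fin d) (Fin d) ℝ) : Prop :=
  V * Vd * V = V ∧ Vd * V * Vd = Vd ∧ (V * Vd)ᵀ = V * Vd ∧ (Vd * V)ᵀ = Vd * V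

lemma s17.mp_unique {d : ℕ} {M B₁ B₂ : Matrix (Fin d) (Fin d) ℝ}
    (h₁ : IsMoorePenrose M B₁) (h₂ : IsMoorePenrose M B₂) : B₁ = B₂ := by
  obtain ⟨a1, b1, c1, d1⟩ := h₁
  obtain ⟨a2, b2, c2, d2⟩ := h₂
  have e1 : (M * B₂) * (M * B₁) = M * B₁ := by
    calc (M * B₂) * (M * B₁) = (M * B₂ * M) * B₁ := by noncomm_ring
    _ = M * B₁ := by rw [a2]
  have e2 : (B₂ * M) * (B₁ * M) = B₂ * M := by
    rw [mul_assoc, ← mul_assoc M B₁ M, a1]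
  have hMB : M * B₁ = M * B₂ := by
    calc M * B₁ = (M * B₂) * (M * B₁) := e1.symm
    _ = (M * B₂)ᵀ * (M * B₁)ᵀ := by rw [c1, c2]
    _ = ((M * B₁) * (M * B₂))ᵀ := by rw [Matrix.transpose_mul (M * B₁) (M * B₂)]
    _ = (M * (B₁ * M) * B₂)ᵀ := congrArg _ (by noncomm_ring)
    _ = ((M * B₁ * M) * B₂)ᵀ := congrArg _ (by noncomm_ring)
    _ = (M * B₂)ᵀ := by rw [a1]
    _ = M * B₂ := c2
  have hBM : B₂ * M = B₁ * M := by
    calc B₂ * M = ((B₂ * M) * (B₁ * M))ᵀ := by rw [e2, d2]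
    _ = (B₁ * M)ᵀ * (B₂ * M)ᵀ := by rw [Matrix.transpose_mul (B₂ * M) (B₁ * M)]
    _ = (B₁ * M) * (B₂ * M) := by rw [d1, d2]
    _ = B₁ * (M * B₂ * M) := by noncomm_ring
    _ = B₁ * M := by rw [a2]
  calc B₁ = B₁ * M * B₁ := b1.symm
  _ = B₁ * (M * B₂) := by rw [mul_assoc, hMB]
  _ = (B₂ * M) * B₂ := by rw [hBM]; noncomm_ring
  _ = B₂ := b2

lemma s17.eval_charpoly {d : ℕ} (M : Matrix (Fin d) (Fin d) ℝ) (t : ℝ) :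
    M.charpoly.eval t = (Matrix.scalar (Fin d) t - M).det := by
  rw [Matrix.charpoly, eval_det, matPolyEquiv_charmatrix]
  simp

lemma s17.charpoly_prod {d : ℕ} {M : Matrix (Fin d) (Fin d) ℝ} (hM : M.IsHermitian) :
    M.charpoly = ∏ i, (X - C (hM.eigenvalues i)) := by
  apply Polynomial.funext
  intro t
  rw [s17.eval_charpoly]
  set U : Matrix (Fin d) (Fin d) ℝ := (hM.eigenvectorUnitary : Matrix (Fin d) (Fin d) ℝ) with hU
  have hU1 : U * star U = 1 := (Matrix.mem_unitaryGroup_iff).mp hM.eigenvectorUnitary.2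
  have hspec : M = U * Matrix.diagonal hM.eigenvalues * star U := by
    simpa using hM.spectral_theorem
  have key : Matrix.scalar (Fin d) t - M
      = U * (Matrix.scalar (Fin d) t - Matrix.diagonal hM.eigenvalues) * star U := by
    rw [Matrix.mul_sub, Matrix.sub_mul, ← hspec]
    congr 1
    rw [← (Matrix.scalar_commute t (fun r => Commute.all t r) U).eq, mul_assoc, hU1, mul_one]
  have hU2 : star U * U = 1 := (Matrix.mem_unitaryGroup_iff').mp hM.eigenvectorUnitary.2
  rw [key, Matrix.det_mul_comm, ← mul_assoc, hU2, one_mul]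
  rw [show Matrix.scalar (Fin d) t - Matrix.diagonal hM.eigenvalues
      = Matrix.diagonal (fun i => t - hM.eigenvalues i) from by
    rw [← Matrix.diagonal_sub]; rfl]
  rw [Matrix.det_diagonal, Polynomial.eval_prod]
  simp

section conj
variable {d : ℕ} {U : Matrix (Fin d) (Fin d) ℝ}

lemma s17.cancel (hU2 : star U * U = 1) (X : Matrix (Fin d) (Fin d) ℝ) :
    star U * (U * X) = X := by rw [← mul_assoc, hU2, one_mul]

lemma s17.conj_diag_mul (hU2 : star U * U = 1) (v w : Fin d → ℝ) :
    (U * Matrix.diagonal v * star U) * (U * Matrix.diagonal w * star U)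
      = U * Matrix.diagonal (fun i => v i * w i) * star U := by
  simp only [mul_assoc, s17.cancel hU2]
  rw [← mul_assoc (Matrix.diagonal v), Matrix.diagonal_mul_diagonal]

lemma s17.conj_pow (hU1 : U * star U = 1) (hU2 : star U * U = 1)
    (N : Matrix (Fin d) (Fin d) ℝ) (n : ℕ) :
    (U * N * star U) ^ n = U * N ^ n * star U := by
  induction n with
  | zero => simp [hU1]
  | succ n ih =>
    rw [pow_succ, ih, pow_succ]
    simp only [mul_assoc, s17.cancel hU2]

lemma s17.conj_diag_symm (hstar : star U = Uᵀ) (w : Fin d → ℝ) :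
    (U * Matrix.diagonal w * star U)ᵀ = U * Matrix.diagonal w * star U := by
  rw [hstar, Matrix.transpose_mul, Matrix.transpose_mul, Matrix.transpose_transpose,
    Matrix.diagonal_transpose, mul_assoc]

end conj

noncomputable def s17.G {d : ℕ} (r : ℕ) (M : Matrix (Fin d) (Fin d) ℝ) : Matrix (Fin d) (Fin d) ℝ :=
  ∑ j ∈ Finset.range r, M.charpoly.coeff (d - r + j + 1) • M ^ j

noncomputable def s17.F {d : ℕ} (r : ℕ) (M : Matrix (Fin d) (Fin d) ℝ) : Matrix (Fin d) (Fin d) ℝ :=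
  ((M.charpoly.coeff (d - r))⁻¹) ^ 2 • (M * s17.G r M * s17.G r M)

lemma s17.mp_eq_F {d r : ℕ} {M B : Matrix (Fin d) (Fin d) ℝ}
    (hM : M.IsHermitian) (hrank : M.rank = r) (hmp : IsMoorePenrose M B) :
    M.charpoly.coeff (d - r) ≠ 0 ∧ B = s17.F r M := by
  classical
  set lam := hM.eigenvalues with hlam
  set U : Matrix (Fin d) (Fin d) ℝ := (hM.eigenvectorUnitary : Matrix (Fin d) (Fin d) ℝ) with hUdef
  have hU1 : U * star U = 1 := (Matrix.mem_unitaryGroup_iff).mp hM.eigenvectorUnitary.2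
  have hU2 : star U * U = 1 := (Matrix.mem_unitaryGroup_iff').mp hM.eigenvectorUnitary.2
  have hstar : star U = Uᵀ := by
    rw [Matrix.star_eq_conjTranspose, Matrix.conjTranspose_eq_transpose_of_trivial]
  have hspec : M = U * Matrix.diagonal lam * star U := by simpa using hM.spectral_theorem
  set S : Finset (Fin d) := Finset.univ.filter (fun i => lam i ≠ 0) with hS
  have hcard : S.card = r := by
    rw [← hrank, hM.rank_eq_card_non_zero_eigs, Fintype.card_subtype]
  set ψ : Polynomial ℝ := ∏ i ∈ S, (X - C (lam i)) with hψ
  have hψdeg : ψ.natDegree = r := by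
    rw [hψ, Polynomial.natDegree_prod _ _ (fun i _ => Polynomial.X_sub_C_ne_zero _)]
    simp [hcard]
  have hfact : M.charpoly = X ^ (d - r) * ψ := by
    rw [s17.charpoly_prod hM, ← Finset.prod_filter_mul_prod_filter_not Finset.univ
      (fun i => lam i ≠ 0)]
    rw [mul_comm]
    congr 1
    · calc (∏ i ∈ Finset.univ.filter (fun i => ¬ lam i ≠ 0), (X - C (lam i)))
          = ∏ i ∈ Finset.univ.filter (fun i => ¬ lam i ≠ 0), X := by
            apply Finset.prod_congr rfl
            intro i hi
            simp only [Finset.mem_filter, not_not] at hi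
            rw [hi.2, map_zero, sub_zero]
      _ = X ^ (d - r) := by
            rw [Finset.prod_const]
            congr 1
            have h1 := Finset.card_filter_add_card_filter_not (s := Finset.univ)
              (p := fun i => lam i ≠ 0)
            simp only [Finset.card_univ, Fintype.card_fin] at h1
            have h2 : (Finset.univ.filter (fun i => lam i ≠ 0)).card = r := hcard
            omega
  have hcoeff : ∀ j, M.charpoly.coeff (d - r + j) = ψ.coeff j := by
    intro j
    rw [hfact, show d - r + j = j + (d - r) from by omega, Polynomial.coeff_X_pow_mul]
  have ha0 : ψ.coeff 0 ≠ 0 := by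
    rw [Polynomial.coeff_zero_eq_eval_zero, hψ, Polynomial.eval_prod]
    apply Finset.prod_ne_zero_iff.mpr
    intro i hi
    simp only [hS, Finset.mem_filter] at hi
    simp only [Polynomial.eval_sub, Polynomial.eval_X, Polynomial.eval_C, zero_sub, neg_ne_zero]
    exact hi.2
  set a0 := ψ.coeff 0 with ha0def
  refine ⟨by rw [show d - r = d - r + 0 from rfl, hcoeff 0]; exact ha0, ?_⟩
  -- the scalar function g
  set g : Fin d → ℝ := fun i => ∑ j ∈ Finset.range r, ψ.coeff (j + 1) * lam i ^ j with hg
  have hψeval : ∀ i ∈ S, ψ.eval (lam i) = 0 := by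
    intro i hi
    rw [hψ, Polynomial.eval_prod]
    exact Finset.prod_eq_zero hi (by simp)
  have hlamg : ∀ i ∈ S, lam i * g i = -a0 := by
    intro i hi
    have h0 := hψeval i hi
    rw [Polynomial.eval_eq_sum_range' (n := r + 1) (by omega) (lam i)] at h0
    rw [Finset.sum_range_succ'] at h0
    simp only [pow_zero, mul_one] at h0
    have : lam i * g i = ∑ j ∈ Finset.range r, ψ.coeff (j + 1) * lam i ^ (j + 1) := by
      rw [hg, Finset.mul_sum]
      apply Finset.sum_congr rfl
      intro j _
      ring
    rw [this]
    linarith [h0]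
  -- G as conjugated diagonal
  have hMpow : ∀ j : ℕ, M ^ j = U * Matrix.diagonal (fun i => lam i ^ j) * star U := by
    intro j
    rw [hspec, s17.conj_pow hU1 hU2, Matrix.diagonal_pow]
    rfl
  have hGconj : s17.G r M = U * Matrix.diagonal g * star U := by
    rw [s17.G]
    have : ∀ j ∈ Finset.range r, M.charpoly.coeff (d - r + j + 1) • M ^ j
        = U * Matrix.diagonal (fun i => ψ.coeff (j + 1) * lam i ^ j) * star U := by
      intro j _
      rw [show d - r + j + 1 = d - r + (j + 1) from by omega, hcoeff, hMpow j]
      rw [show (fun i => ψ.coeff (j + 1) * lam i ^ j)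
          = ψ.coeff (j + 1) • (fun i => lam i ^ j) from rfl]
      rw [Matrix.diagonal_smul, mul_smul_comm, smul_mul_assoc]
    rw [Finset.sum_congr rfl this]
    rw [← Finset.sum_mul, ← Matrix.mul_sum]
    congr 2
    ext i k
    rw [Matrix.sum_apply]
    by_cases hik : i = k
    · subst hik; simp [Matrix.diagonal_apply_eq, hg]
    · simp [Matrix.diagonal_apply_ne _ hik]
  set pv : Fin d → ℝ := fun i => if lam i = 0 then 0 else (lam i)⁻¹ with hpv
  have hcoeff0 : M.charpoly.coeff (d - r) = a0 := by
    rw [show d - r = d - r + 0 from rfl, hcoeff 0]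
  have hgi : ∀ i, lam i ≠ 0 → g i = -a0 * (lam i)⁻¹ := by
    intro i hi
    have hiS : i ∈ S := by simp [hS, hi]
    have := hlamg i hiS
    field_simp
    linarith [this]
  have hMGG : M * s17.G r M * s17.G r M
      = U * Matrix.diagonal (fun i => lam i * g i * g i) * star U := by
    rw [hGconj, hspec, s17.conj_diag_mul hU2]
    rw [s17.conj_diag_mul hU2]
  have hdiag : (fun i => lam i * g i * g i) = a0 ^ 2 • pv := by
    funext i
    by_cases hi : lam i = 0
    · simp [hpv, hi]
    · have hg' := hgi i hi
      have hl := hlamg i (by simp [hS, hi])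
      simp only [Pi.smul_apply, hpv, if_neg hi, smul_eq_mul]
      rw [hl, hg']
      field_simp
  have hFconj : s17.F r M = U * Matrix.diagonal pv * star U := by
    rw [s17.F, hcoeff0, hMGG, hdiag]
    rw [Matrix.diagonal_smul, mul_smul_comm, smul_mul_assoc, smul_smul]
    rw [show a0⁻¹ ^ 2 * a0 ^ 2 = 1 from by field_simp, one_smul]
  have hId1 : (fun i => lam i * pv i * lam i) = lam := by
    funext i
    by_cases hi : lam i = 0 <;> simp [hpv, hi]
  have hId2 : (fun i => pv i * lam i * pv i) = pv := by
    funext i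
    by_cases hi : lam i = 0 <;> simp [hpv, hi]
  have hmpF : IsMoorePenrose M (s17.F r M) := by
    refine ⟨?_, ?_, ?_, ?_⟩
    · rw [hFconj]
      conv_lhs => rw [hspec]
      conv_rhs => rw [hspec]
      rw [s17.conj_diag_mul hU2, s17.conj_diag_mul hU2]
      rw [show (fun i => lam i * pv i * lam i) = lam from hId1]
    · rw [hFconj]
      conv_lhs => rw [hspec]
      rw [s17.conj_diag_mul hU2, s17.conj_diag_mul hU2]
      rw [show (fun i => pv i * lam i * pv i) = pv from hId2]
    · rw [hFconj]
      conv_lhs => rw [hspec]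
      conv_rhs => rw [hspec]
      rw [s17.conj_diag_mul hU2]
      exact s17.conj_diag_symm hstar _
    · rw [hFconj]
      conv_lhs => rw [hspec]
      conv_rhs => rw [hspec]
      rw [s17.conj_diag_mul hU2]
      exact s17.conj_diag_symm hstar _
  exact s17.mp_unique hmp hmpF


lemma s17.trace_eq_rank {d : ℕ} {M B : Matrix (Fin d) (Fin d) ℝ}
    (hmp : IsMoorePenrose M B) :
    (M * B).trace = (M.rank : ℝ) := by
  classical
  obtain ⟨a1, b1, c1, d1⟩ := hmp
  have hPidem : (M * B) * (M * B) = M * B := by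
    calc (M * B) * (M * B) = (M * B * M) * B := by noncomm_ring
    _ = M * B := by rw [a1]
  have hPherm : (M * B).IsHermitian := by
    rw [Matrix.IsHermitian, Matrix.conjTranspose_eq_transpose_of_trivial, c1]
  have hrankP : (M * B).rank = M.rank := by
    apply le_antisymm
    · exact Matrix.rank_mul_le_left M B
    · calc M.rank = ((M * B) * M).rank := by rw [mul_assoc, ← mul_assoc, a1]
      _ ≤ (M * B).rank := Matrix.rank_mul_le_left (M * B) M
  set P := M * B with hPdef
  set lam := hPherm.eigenvalues with hlam
  set U : Matrix (Fin d) (Fin d) ℝ := (hPherm.eigenvectorUnitary : Matrix (Fin d) (Fin d) ℝ)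
    with hUdef
  have hU1 : U * star U = 1 := (Matrix.mem_unitaryGroup_iff).mp hPherm.eigenvectorUnitary.2
  have hU2 : star U * U = 1 := (Matrix.mem_unitaryGroup_iff').mp hPherm.eigenvectorUnitary.2
  have hspec : P = U * Matrix.diagonal lam * star U := by simpa using hPherm.spectral_theorem
  have hDD : Matrix.diagonal (fun i => lam i * lam i) = Matrix.diagonal lam := by
    have h1 : U * Matrix.diagonal (fun i => lam i * lam i) * star U
        = U * Matrix.diagonal lam * star U := by
      rw [← s17.conj_diag_mul hU2, ← hspec, hPidem]
    have h2 := congrArg (fun X => star U * X * U) h1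
    simpa only [mul_assoc, s17.cancel hU2, ← mul_assoc, hU2, one_mul,
      mul_assoc (star U * U)] using
      (by
        calc Matrix.diagonal (fun i => lam i * lam i)
            = star U * (U * (Matrix.diagonal (fun i => lam i * lam i) * (star U * U))) := by
              rw [hU2, mul_one, s17.cancel hU2]
        _ = star U * (U * (Matrix.diagonal lam * (star U * U))) := by
              rw [show U * (Matrix.diagonal (fun i => lam i * lam i) * (star U * U))
                  = (U * Matrix.diagonal (fun i => lam i * lam i) * star U) * U from by
                    noncomm_ring, h1]
              noncomm_ring
        _ = Matrix.diagonal lam := by rw [hU2, mul_one, s17.cancel hU2])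
  have hlam01 : ∀ i, lam i = 0 ∨ lam i = 1 := by
    intro i
    have := congrFun (congrFun hDD i) i
    simp only [Matrix.diagonal_apply_eq] at this
    have h : lam i * (lam i - 1) = 0 := by ring_nf; linarith [this]
    rcases mul_eq_zero.mp h with h' | h'
    · exact Or.inl h'
    · exact Or.inr (by linarith)
  have htr : P.trace = ∑ i, lam i := by
    rw [hspec, Matrix.trace_mul_cycle, hU2, one_mul, Matrix.trace_diagonal]
  have hrank2 : P.rank = (Finset.univ.filter (fun i => lam i ≠ 0)).card := by
    rw [hPherm.rank_eq_card_non_zero_eigs, Fintype.card_subtype]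
  rw [← hrankP, htr, hrank2]
  rw [← Finset.sum_filter_ne_zero Finset.univ (f := lam)]
  rw [Finset.sum_congr rfl (fun i hi => ?_)]
  · rw [Finset.sum_const, nsmul_eq_mul, mul_one]
  · simp only [Finset.mem_filter] at hi
    rcases hlam01 i with h | h
    · exact absurd h hi.2
    · exact h

lemma s17.continuous_charpoly_coeff {d : ℕ} (k : ℕ) :
    Continuous fun M : Matrix (Fin d) (Fin d) ℝ => M.charpoly.coeff k := by
  classical
  set s : Finset ℝ := (Finset.range (d + 1)).image (Nat.cast) with hs
  have hcard : s.card = d + 1 := by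
    rw [hs, Finset.card_image_of_injective _ Nat.cast_injective, Finset.card_range]
  have hinj : Set.InjOn id (s : Set ℝ) := Function.injective_id.injOn
  have hrepr : (fun M : Matrix (Fin d) (Fin d) ℝ => M.charpoly.coeff k)
      = fun M => ∑ t ∈ s, (Matrix.scalar (Fin d) t - M).det * (Lagrange.basis s id t).coeff k := by
    funext M
    have hdeg : M.charpoly.degree < (s.card : ℕ) := by
      rw [hcard]
      refine lt_of_le_of_lt (Polynomial.degree_le_natDegree) ?_
      rw [Matrix.charpoly_natDegree_eq_dim, Fintype.card_fin]
      exact_mod_cast Nat.lt_succ_self d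
    conv_lhs => rw [Lagrange.eq_interpolate hinj hdeg, Lagrange.interpolate_apply]
    rw [Polynomial.finset_sum_coeff]
    apply Finset.sum_congr rfl
    intro t _
    rw [Polynomial.coeff_C_mul, id_eq, s17.eval_charpoly]
  rw [hrepr]
  apply continuous_finset_sum
  intro t _
  exact ((continuous_const.sub continuous_id).matrix_det).mul continuous_const

lemma s17.continuous_G {d : ℕ} (r : ℕ) : Continuous (s17.G (d := d) r) := by
  apply continuous_finset_sum
  intro j _
  exact (s17.continuous_charpoly_coeff _).smul (continuous_pow j)

lemma s17.tendsto_mp {d : ℕ} {A : ℕ → Matrix (Fin d) (Fin d) ℝ}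
    {A' B' : Matrix (Fin d) (Fin d) ℝ} {B : ℕ → Matrix (Fin d) (Fin d) ℝ}
    (hherm : ∀ n, (A n).IsHermitian) (hherm' : A'.IsHermitian)
    (hmp : ∀ n, IsMoorePenrose (A n) (B n)) (hmp' : IsMoorePenrose A' B')
    (hrank : ∀ᶠ n in atTop, (A n).rank = A'.rank)
    (hconv : Tendsto A atTop (nhds A')) :
    Tendsto B atTop (nhds B') := by
  set r := A'.rank with hr
  obtain ⟨ha0, hB'⟩ := s17.mp_eq_F hherm' rfl hmp'
  have hFB : ∀ᶠ n in atTop, B n = s17.F r (A n) :=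
    hrank.mono fun n hn => (s17.mp_eq_F (hherm n) hn (hmp n)).2
  have hcont : ContinuousAt (s17.F (d := d) r) A' := by
    refine ContinuousAt.smul (f := fun M : Matrix (Fin d) (Fin d) ℝ => ((M.charpoly.coeff (d - r))⁻¹) ^ 2)
      (g := fun M => M * s17.G r M * s17.G r M) ?_ ?_
    · exact (((s17.continuous_charpoly_coeff (d - r)).continuousAt).inv₀ ha0).pow 2
    · exact ((continuous_id.mul (s17.continuous_G r)).mul (s17.continuous_G r)).continuousAt
  have := (hcont.tendsto).comp hconv
  rw [← hB'] at this
  exact this.congr' (by filter_upwards [hFB] with n hn using hn.symm)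

section measure
variable {Ω : Type*} [MeasurableSpace Ω] {ℙ : Measure Ω}

lemma s17.tim_pi {ι : Type*} [Fintype ι] {f : ℕ → Ω → ι → ℝ} {g : Ω → ι → ℝ}
    (h : ∀ i, TendstoInMeasure ℙ (fun n ω => f n ω i) atTop (fun ω => g ω i)) :
    TendstoInMeasure ℙ f atTop g := by
  intro ε hε
  have hsub : ∀ n, {x | ε ≤ edist (f n x) (g x)}
      ⊆ ⋃ i ∈ (Finset.univ : Finset ι), {x | ε ≤ edist (f n x i) (g x i)} := by
    intro n x hx
    simp only [Set.mem_setOf_eq] at hx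
    by_contra hcon
    simp only [Set.mem_iUnion, Set.mem_setOf_eq, not_exists, not_le] at hcon
    have : edist (f n x) (g x) < ε := by
      rw [edist_pi_def, Finset.sup_lt_iff hε]
      intro i _
      exact hcon i (Finset.mem_univ i)
    exact absurd hx (not_le.mpr this)
  have hle : ∀ n, ℙ {x | ε ≤ edist (f n x) (g x)}
      ≤ ∑ i, ℙ {x | ε ≤ edist (f n x i) (g x i)} := fun n =>
    (measure_mono (hsub n)).trans (measure_biUnion_finset_le _ _)
  have hsumz : Tendsto (fun n => ∑ i, ℙ {x | ε ≤ edist (f n x i) (g x i)}) atTop (nhds 0) := by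
    have := tendsto_finset_sum (Finset.univ : Finset ι) (fun i _ => h i ε hε)
    simpa using this
  exact tendsto_of_tendsto_of_tendsto_of_le_of_le tendsto_const_nhds hsumz
    (fun n => zero_le) hle

lemma s17.tim_proj {ι : Type*} [Fintype ι] {f : ℕ → Ω → ι → ℝ} {g : Ω → ι → ℝ}
    (h : TendstoInMeasure ℙ f atTop g) (i : ι) :
    TendstoInMeasure ℙ (fun n ω => f n ω i) atTop (fun ω => g ω i) := by
  intro ε hε
  refine tendsto_of_tendsto_of_tendsto_of_le_of_le tendsto_const_nhds (h ε hε)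
    (fun n => zero_le) (fun n => measure_mono ?_)
  intro x hx
  simp only [Set.mem_setOf_eq] at hx ⊢
  exact hx.trans (edist_le_pi_edist (f n x) (g x) i)

lemma s17.tim_subseq {E : Type*} [EDist E] {f : ℕ → Ω → E} {g : Ω → E} {ns : ℕ → ℕ}
    (h : TendstoInMeasure ℙ f atTop g) (hns : Tendsto ns atTop atTop) :
    TendstoInMeasure ℙ (fun k => f (ns k)) atTop g :=
  fun ε hε => (h ε hε).comp hns

lemma s17.tim_comp [IsFiniteMeasure ℙ] {ι : Type*} [Fintype ι]
    {f : ℕ → Ω → ι → ℝ} {c : ι → ℝ}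
    (hmeas : ∀ n, Measurable (f n))
    (h : TendstoInMeasure ℙ f atTop (fun _ => c))
    {φ : (ι → ℝ) → ℝ} (hφ : Continuous φ) :
    TendstoInMeasure ℙ (fun n ω => φ (f n ω)) atTop (fun _ => φ c) := by
  intro ε hε
  apply tendsto_of_subseq_tendsto
  intro ns hns
  obtain ⟨ms, -, hae⟩ := (s17.tim_subseq h hns).exists_seq_tendsto_ae
  refine ⟨ms, ?_⟩
  have hae2 : ∀ᵐ ω ∂ℙ, Tendsto (fun k => φ (f (ns (ms k)) ω)) atTop (nhds (φ c)) := by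
    filter_upwards [hae] with ω hω using (hφ.tendsto c).comp hω
  have := tendstoInMeasure_of_tendsto_ae
    (fun k => ((hφ.measurable.comp (hmeas (ns (ms k)))).stronglyMeasurable).aestronglyMeasurable)
    hae2
  exact this ε hε

end measure

end s17aux

/-- For random symmetric positive semi-definite matrices `V̂_n → V` in
probability (entrywise), the pseudoinverses satisfy `V̂_n† → V†` in probability if and
only if `ℙ(rank V̂_n = rank V) → 1`. -/
theorem statement_17
    (Ω : Type*) [MeasurableSpace Ω] (ℙ : Measure Ω) [IsProbabilityMeasure ℙ]
    (d : ℕ)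
    (W : ℕ → Ω → Matrix (Fin d) (Fin d) ℝ)
    (Wd : ℕ → Ω → Matrix (Fin d) (Fin d) ℝ)
    (V Vd : Matrix (Fin d) (Fin d) ℝ)
    (hWmeas : ∀ n i j, Measurable (fun ω => W n ω i j))
    (hWdmeas : ∀ n i j, Measurable (fun ω => Wd n ω i j))
    (hWpsd : ∀ n ω, (W n ω).PosSemidef)
    (hVpsd : V.PosSemidef)
    -- `Wd n ω` is the Moore–Penrose pseudoinverse of `W n ω`, and `Vd` that of `V`:
    (hWpinv : ∀ n ω, IsMoorePenrose (W n ω) (Wd n ω))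
    (hVpinv : IsMoorePenrose V Vd)
    -- `V̂_n → V` in probability (entrywise):
    (hconv : ∀ i j, TendstoInMeasure ℙ (fun n ω => W n ω i j) atTop (fun _ => V i j)) :
    (∀ i j, TendstoInMeasure ℙ (fun n ω => Wd n ω i j) atTop (fun _ => Vd i j)) ↔
      Tendsto (fun n => (ℙ {ω | (W n ω).rank = V.rank}).toReal) atTop (nhds 1) := by
  classical
  -- vectorised versions
  set W' : ℕ → Ω → (Fin d × Fin d) → ℝ := fun n ω p => W n ω p.1 p.2 with hW'
  set Wd' : ℕ → Ω → (Fin d × Fin d) → ℝ := fun n ω p => Wd n ω p.1 p.2 with hWd'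
  set V' : (Fin d × Fin d) → ℝ := fun p => V p.1 p.2 with hV'
  set Vd' : (Fin d × Fin d) → ℝ := fun p => Vd p.1 p.2 with hVd'
  have hW'meas : ∀ n, Measurable (W' n) :=
    fun n => measurable_pi_lambda _ (fun p => hWmeas n p.1 p.2)
  have hWd'meas : ∀ n, Measurable (Wd' n) :=
    fun n => measurable_pi_lambda _ (fun p => hWdmeas n p.1 p.2)
  have hW'tim : TendstoInMeasure ℙ W' atTop (fun _ => V') :=
    s17.tim_pi (fun p => hconv p.1 p.2)
  -- the trace function
  set T : ℕ → Ω → ℝ := fun n ω => ((W n ω) * (Wd n ω)).trace with hT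
  have hTval : ∀ n ω, T n ω = (((W n ω).rank : ℕ) : ℝ) :=
    fun n ω => s17.trace_eq_rank (hWpinv n ω)
  have hVval : (V * Vd).trace = ((V.rank : ℕ) : ℝ) := s17.trace_eq_rank hVpinv
  have hTmeas : ∀ n, Measurable (T n) := by
    intro n
    have : T n = fun ω => ∑ i : Fin d, ∑ j : Fin d, W n ω i j * Wd n ω j i := by
      funext ω
      simp [hT, Matrix.trace, Matrix.diag, Matrix.mul_apply]
    rw [this]
    exact Finset.measurable_sum _ (fun i _ =>
      Finset.measurable_sum _ (fun j _ => (hWmeas n i j).mul (hWdmeas n j i)))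
  set E : ℕ → Set Ω := fun n => {ω | (W n ω).rank = V.rank} with hE
  have hEeq : ∀ n, E n = (T n) ⁻¹' {((V.rank : ℕ) : ℝ)} := by
    intro n
    ext ω
    simp only [hE, Set.mem_setOf_eq, Set.mem_preimage, Set.mem_singleton_iff, hTval n ω]
    exact ⟨fun h => by exact_mod_cast h, fun h => by exact_mod_cast h⟩
  have hEmeas : ∀ n, MeasurableSet (E n) := by
    intro n
    rw [hEeq]
    exact (hTmeas n) (measurableSet_singleton _)
  have hco : ∀ n, (ℙ (E n)).toReal = 1 - (ℙ (E n)ᶜ).toReal := by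
    intro n
    have h1 := measure_add_measure_compl (μ := ℙ) (hEmeas n)
    rw [measure_univ] at h1
    have h2 : (ℙ (E n)).toReal + (ℙ (E n)ᶜ).toReal = 1 := by
      rw [← ENNReal.toReal_add (measure_ne_top ℙ _) (measure_ne_top ℙ _), h1]
      simp
    linarith
  have hnatdist : ∀ a b : ℕ, a ≠ b → (1 : ℝ) ≤ |(a : ℝ) - (b : ℝ)| := by
    intro a b hab
    have h1 : ((a : ℤ) - b) ≠ 0 := sub_ne_zero.mpr (by exact_mod_cast hab)
    have h2 : (1 : ℤ) ≤ |(a : ℤ) - b| := Int.one_le_abs h1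
    calc (1 : ℝ) = ((1 : ℤ) : ℝ) := by norm_num
    _ ≤ ((|(a : ℤ) - b| : ℤ) : ℝ) := by exact_mod_cast h2
    _ = |(a : ℝ) - b| := by push_cast; ring_nf
  constructor
  · -- pseudoinverse convergence implies rank convergence
    intro hWd
    -- joint vector and trace as continuous function
    set jt : ℕ → Ω → ((Fin d × Fin d) ⊕ (Fin d × Fin d)) → ℝ :=
      fun n ω => Sum.elim (W' n ω) (Wd' n ω) with hjt
    have hjmeas : ∀ n, Measurable (jt n) := by
      intro n
      apply measurable_pi_lambda
      intro s
      cases s with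
      | inl p => exact hWmeas n p.1 p.2
      | inr p => exact hWdmeas n p.1 p.2
    have hjtim : TendstoInMeasure ℙ jt atTop (fun _ => Sum.elim V' Vd') := by
      apply s17.tim_pi
      intro s
      cases s with
      | inl p => exact hconv p.1 p.2
      | inr p => exact hWd p.1 p.2
    set φ : (((Fin d × Fin d) ⊕ (Fin d × Fin d)) → ℝ) → ℝ :=
      fun v => ∑ i : Fin d, ∑ j : Fin d, v (Sum.inl (i, j)) * v (Sum.inr (j, i)) with hφ
    have hφcont : Continuous φ := by
      apply continuous_finset_sum
      intro i _
      apply continuous_finset_sum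
      intro j _
      exact (continuous_apply _).mul (continuous_apply _)
    have hφT : ∀ n ω, φ (jt n ω) = T n ω := by
      intro n ω
      simp [hφ, hjt, hT, hW', hWd', Matrix.trace, Matrix.diag, Matrix.mul_apply]
    have hφc : φ (Sum.elim V' Vd') = ((V.rank : ℕ) : ℝ) := by
      rw [← hVval]
      simp [hφ, hV', hVd', Matrix.trace, Matrix.diag, Matrix.mul_apply]
    have hTtim : TendstoInMeasure ℙ T atTop (fun _ => ((V.rank : ℕ) : ℝ)) := by
      have := s17.tim_comp hjmeas hjtim hφcont
      exact this.congr (fun n => Eventually.of_forall (fun ω => hφT n ω))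
        (Eventually.of_forall (fun ω => hφc))
    have h12 := hTtim (1/2) (ENNReal.half_pos one_ne_zero)
    have hsub : ∀ n, (E n)ᶜ ⊆ {ω | (1/2 : ENNReal) ≤ edist (T n ω) ((V.rank : ℕ) : ℝ)} := by
      intro n ω hω
      simp only [hE, Set.mem_compl_iff, Set.mem_setOf_eq] at hω
      simp only [Set.mem_setOf_eq, edist_dist, Real.dist_eq, hTval n ω]
      have := hnatdist _ _ hω
      calc (1/2 : ENNReal) ≤ 1 := ENNReal.half_le_self
      _ = ENNReal.ofReal 1 := by simp
      _ ≤ _ := ENNReal.ofReal_le_ofReal this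
    have hcz : Tendsto (fun n => ℙ (E n)ᶜ) atTop (nhds 0) :=
      tendsto_of_tendsto_of_tendsto_of_le_of_le tendsto_const_nhds h12
        (fun n => zero_le) (fun n => measure_mono (hsub n))
    have hczR : Tendsto (fun n => (ℙ (E n)ᶜ).toReal) atTop (nhds 0) := by
      have := (ENNReal.tendsto_toReal (by simp)).comp hcz
      exact this
    have : Tendsto (fun n => 1 - (ℙ (E n)ᶜ).toReal) atTop (nhds 1) := by
      have := tendsto_const_nhds (x := (1:ℝ)) (f := atTop).sub hczR
      simpa using this
    exact this.congr (fun n => (hco n).symm)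
  · -- rank convergence implies pseudoinverse convergence
    intro hrank
    have hczR : Tendsto (fun n => (ℙ (E n)ᶜ).toReal) atTop (nhds 0) := by
      have : Tendsto (fun n => 1 - (ℙ (E n)).toReal) atTop (nhds 0) := by
        have := tendsto_const_nhds (x := (1:ℝ)) (f := atTop).sub hrank
        simpa using this
      refine this.congr (fun n => ?_)
      have := hco n
      linarith
    have hcz : Tendsto (fun n => ℙ (E n)ᶜ) atTop (nhds 0) := by
      have h2 := ENNReal.tendsto_ofReal hczR
      rw [ENNReal.ofReal_zero] at h2
      refine h2.congr (fun n => ?_)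
      rw [ENNReal.ofReal_toReal (measure_ne_top ℙ _)]
    have key : TendstoInMeasure ℙ Wd' atTop (fun _ => Vd') := by
      intro ε hε
      apply tendsto_of_subseq_tendsto
      intro ns hns
      obtain ⟨ms₁, hms₁, hae⟩ := (s17.tim_subseq hW'tim hns).exists_seq_tendsto_ae
      have hcz2 : Tendsto (fun k => ℙ (E (ns (ms₁ k)))ᶜ) atTop (nhds 0) :=
        hcz.comp (hns.comp hms₁.tendsto_atTop)
      have hev : ∀ m : ℕ, ∀ᶠ k in atTop, ℙ (E (ns (ms₁ k)))ᶜ ≤ (2⁻¹ : ENNReal) ^ m := by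
        intro m
        filter_upwards [hcz2.eventually (Filter.eventually_mem_set.mpr
          (Iio_mem_nhds (ENNReal.pow_pos (ENNReal.inv_pos.mpr (ENNReal.ofNat_ne_top (n := 2))) m)))] with k hk
        exact le_of_lt hk
      obtain ⟨ms₂, hms₂, hbound⟩ := Filter.extraction_forall_of_eventually hev
      have hsum : (∑' k, ℙ (E (ns (ms₁ (ms₂ k))))ᶜ) ≠ ⊤ := by
        refine ne_top_of_le_ne_top ?_ (ENNReal.tsum_le_tsum (fun k => hbound k))
        rw [ENNReal.tsum_geometric]
        simp
      have hBC := MeasureTheory.ae_eventually_notMem hsum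
      have hae2 : ∀ᵐ ω ∂ℙ, Tendsto (fun k => Wd' (ns (ms₁ (ms₂ k))) ω) atTop (nhds Vd') := by
        filter_upwards [hae, hBC] with ω hω hB
        have hWmat : Tendsto (fun k => W (ns (ms₁ (ms₂ k))) ω) atTop (nhds V) := by
          refine tendsto_pi_nhds.mpr ?_
          intro i'
          rw [tendsto_pi_nhds]
          intro j'
          exact tendsto_pi_nhds.mp (hω.comp hms₂.tendsto_atTop) (i', j')
        have hrk : ∀ᶠ k in atTop, (W (ns (ms₁ (ms₂ k))) ω).rank = V.rank := by
          filter_upwards [hB] with k hk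
          exact Set.notMem_compl_iff.mp hk
        have hmat := s17.tendsto_mp (fun k => (hWpsd _ ω).1) hVpsd.1
          (fun k => hWpinv _ ω) hVpinv hrk hWmat
        rw [tendsto_pi_nhds]
        intro p
        exact tendsto_pi_nhds.mp (tendsto_pi_nhds.mp hmat p.1) p.2
      have htim := tendstoInMeasure_of_tendsto_ae
        (fun k => ((hWd'meas (ns (ms₁ (ms₂ k)))).stronglyMeasurable).aestronglyMeasurable) hae2
      exact ⟨fun k => ms₁ (ms₂ k), htim ε hε⟩
    intro i j
    exact s17.tim_proj key (i, j)
end
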